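/- Let R be an integral domain which is a ℚ-algebra, let a ∈ R, and let f = (C a)·exp ∈ R⟦X⟧ (the series a·e^X). Then for every n ≥ 1: A_n(f) = (n−1)! · (C a)^n · rescale n exp; that is, the n-th autonomous polynomial of a·e^X is (n−1)!·a^n·e^{nX}. -/

import Mathlib

open PowerSeries

/-- The autonomous polynomials of a power series: `A_1(f) = f` and
`A_{n+1}(f) = f·δ(A_n(f))`.  Here `autPolyPS f m` is `A_{m+1}(f)`. -/
noncomputable def autPolyPS {R : Type*} [CommRing R] (f : PowerSeries R) :
    ℕ → PowerSeries R
  | 0 => f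
  | m + 1 => f * derivativeFun (autPolyPS f m)

/-- The flow `Φ_f = X + ∑_{n≥1} A_n(f)·T^n/n!` of `f ∈ R⟦X⟧`, as a power series in the time
variable `T` with coefficients in `R⟦X⟧`. -/
noncomputable def flowPS {R : Type*} [CommRing R] [Algebra ℚ R] (f : PowerSeries R) :
    PowerSeries (PowerSeries R) :=
  PowerSeries.mk fun n => if n = 0 then PowerSeries.X
    else PowerSeries.C (R := R) (algebraMap ℚ R (1 / n.factorial)) * autPolyPS f (n - 1)

/-
The series `e^{kX}` are eigenvectors of `δ`, with `δ e^{kX} = k e^{kX}`, and they multiply as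
exponentials, `e^X e^{kX} = e^{(k+1)X}`. Hence if `A_n(a e^X) = c_n e^{nX}` for a constant
`c_n`, then `A_{n+1}(a e^X) = a e^X · n c_n e^{nX} = n a c_n e^{(n+1)X}`, and the constants
`c_n = (n-1)! a^n` are forced by `c_1 = a`.
-/

section Derivative

variable {R : Type*} [CommSemiring R]

theorem derivative_rescale (c : R) (f : R⟦X⟧) :
    d⁄dX R (rescale c f) = C c * rescale c (d⁄dX R f) := by
  ext n
  simp only [coeff_derivative, coeff_rescale, coeff_C_mul, pow_succ]
  ring

theorem derivative_C_mul (r : R) (f : R⟦X⟧) : d⁄dX R (C r * f) = C r * d⁄dX R f := by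
  rw [Derivation.leibniz, derivative_C, smul_zero, add_zero, smul_eq_mul]

end Derivative

section Exp

variable {R : Type*} [CommRing R] [Algebra ℚ R]

theorem derivative_rescale_exp (c : R) :
    d⁄dX R (rescale c (exp R)) = C c * rescale c (exp R) := by
  rw [derivative_rescale, derivative_exp]

theorem exp_mul_rescale_exp (c : R) : exp R * rescale c (exp R) = rescale (c + 1) (exp R) := by
  rw [← exp_mul_exp_eq_exp_add, rescale_one, mul_comm]
  rfl

theorem C_mul_exp_mul_derivative_C_mul_rescale_exp (a b c : R) :
    C a * exp R * d⁄dX R (C b * rescale c (exp R)) = C (a * b * c) * rescale (c + 1) (exp R) := by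
  rw [derivative_C_mul, derivative_rescale_exp, ← exp_mul_rescale_exp]
  simp only [map_mul]
  ring

end Exp

theorem autPolyPS_succ {R : Type*} [CommRing R] (f : R⟦X⟧) (m : ℕ) :
    autPolyPS f (m + 1) = f * d⁄dX R (autPolyPS f m) :=
  rfl

theorem autPolyPS_C_mul_exp {R : Type*} [CommRing R] [Algebra ℚ R] (a : R) (m : ℕ) :
    autPolyPS (C a * exp R) m =
      (m.factorial : R⟦X⟧) * C a ^ (m + 1) * rescale ((m + 1 : ℕ) : R) (exp R) := by
  induction m with
  | zero => simp [autPolyPS]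
  | succ m ih =>
    have hconst : (m.factorial : R⟦X⟧) * C a ^ (m + 1) = C (m.factorial * a ^ (m + 1)) := by simp
    rw [autPolyPS_succ, ih, hconst, C_mul_exp_mul_derivative_C_mul_rescale_exp, Nat.factorial_succ]
    push_cast
    simp only [map_mul, map_pow, map_natCast, map_add, map_one]
    ring

theorem autPolyPS_exp_general {R : Type*} [CommRing R] [Algebra ℚ R] (a : R) :
    ∀ n : ℕ, 1 ≤ n →
      autPolyPS (PowerSeries.C (R := R) a * exp R) (n - 1) =
        ((n - 1).factorial : PowerSeries R) * PowerSeries.C (R := R) a ^ n *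
          rescale (n : R) (exp R) := by
  intro n hn
  obtain ⟨m, rfl⟩ := Nat.exists_eq_add_of_le' hn
  exact autPolyPS_C_mul_exp a m

/-- For an integral domain `R` which is a `ℚ`-algebra and `a ∈ R`, the `n`-th autonomous
polynomial of `f = a·e^X` is `(n-1)!·a^n·e^{nX}` for every `n ≥ 1`. -/
theorem autPolyPS_exp {R : Type*} [CommRing R] [IsDomain R] [Algebra ℚ R] (a : R) :
    ∀ n : ℕ, 1 ≤ n →
      autPolyPS (PowerSeries.C (R := R) a * exp R) (n - 1) =
        ((n - 1).factorial : PowerSeries R) * PowerSeries.C (R := R) a ^ n *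
          rescale (n : R) (exp R) :=
  autPolyPS_exp_general a
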